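/- Assuming the second-moment Haar average formula for U†AUBU†CU, the variance over Haar-random U of the directional derivative ∂_α E(U(α)) = i⟨0|[U†HU, M]|0⟩ equals 2·[(M²)₀₀ − (M₀₀)²]/(N²−1) · (Tr(H²) − Tr(H)²/N), where M₀₀ = ⟨0|M|0⟩ and (M²)₀₀ = ⟨0|M²|0⟩. -/
import Mathlib

open Matrix MeasureTheory

noncomputable instance (N : ℕ) : MeasurableSpace (Matrix.unitaryGroup (Fin N) ℂ) := borel _

section Aux

variable {N : ℕ}

lemma aux_vecMulVec_mulVec (y z u : Fin N → ℂ) :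
    vecMulVec y z *ᵥ u = (z ⬝ᵥ u) • y := by
  funext i
  simp [vecMulVec_apply, mulVec, dotProduct, Finset.mul_sum, mul_assoc, mul_comm, mul_left_comm]

lemma aux_mul_vecMulVec (M : Matrix (Fin N) (Fin N) ℂ) (y z : Fin N → ℂ) :
    M * vecMulVec y z = vecMulVec (M *ᵥ y) z := by
  ext i j
  simp [vecMulVec_apply, Matrix.mul_apply, mulVec, dotProduct, Finset.sum_mul, mul_assoc]

lemma aux_vecMulVec_mul (M : Matrix (Fin N) (Fin N) ℂ) (y z : Fin N → ℂ) :
    vecMulVec y z * M = vecMulVec y (z ᵥ* M) := by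
  ext i j
  simp [vecMulVec_apply, Matrix.mul_apply, vecMul, dotProduct, Finset.mul_sum, mul_assoc]

lemma aux_trace_vecMulVec (y z : Fin N → ℂ) :
    (vecMulVec y z).trace = z ⬝ᵥ y := by
  simp [Matrix.trace, Matrix.diag, vecMulVec_apply, dotProduct, mul_comm]

lemma aux_quad (A C : Matrix (Fin N) (Fin N) ℂ) (x y z w : Fin N → ℂ) :
    (x ⬝ᵥ A *ᵥ y) * (z ⬝ᵥ C *ᵥ w) = x ⬝ᵥ (A * vecMulVec y z * C) *ᵥ w := by
  rw [Matrix.mul_assoc, ← Matrix.mulVec_mulVec, ← Matrix.mulVec_mulVec,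
    aux_vecMulVec_mulVec, Matrix.mulVec_smul, dotProduct_smul, smul_eq_mul, mul_comm]

lemma aux_dot_sum (x y : Fin N → ℂ) (D : Matrix (Fin N) (Fin N) ℂ) :
    x ⬝ᵥ D *ᵥ y = ∑ p ∈ Finset.univ ×ˢ Finset.univ, x p.1 * D p.1 p.2 * y p.2 := by
  rw [Finset.sum_product]
  simp [dotProduct, mulVec, Finset.mul_sum, mul_assoc]

/-- Pointwise decomposition of the squared derivative into three quadratic terms. -/
lemma aux_pointwise (A M : Matrix (Fin N) (Fin N) ℂ) (v : Fin N → ℂ) :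
    (Complex.I * (star v ⬝ᵥ (A * M - M * A) *ᵥ v))^2
      = -(star v ⬝ᵥ (A * (M * vecMulVec v (star v)) * A) *ᵥ (M *ᵥ v))
        + 2 * (star v ⬝ᵥ (A * (M * vecMulVec v (star v) * M) * A) *ᵥ v)
        - ((star v ᵥ* M) ⬝ᵥ (A * (vecMulVec v (star v) * M) * A) *ᵥ v) := by
  have hsplit : star v ⬝ᵥ (A * M - M * A) *ᵥ v
      = star v ⬝ᵥ (A * M) *ᵥ v - star v ⬝ᵥ (M * A) *ᵥ v := by
    rw [Matrix.sub_mulVec, dotProduct_sub]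
  set a := star v ⬝ᵥ (A * M) *ᵥ v with ha
  set b := star v ⬝ᵥ (M * A) *ᵥ v with hb
  have haa : a * a = star v ⬝ᵥ (A * (M * vecMulVec v (star v)) * A) *ᵥ (M *ᵥ v) := by
    rw [ha, aux_quad]
    have : A * M * vecMulVec v (star v) * (A * M)
        = A * (M * vecMulVec v (star v)) * A * M := by
      simp only [Matrix.mul_assoc]
    rw [this, ← Matrix.mulVec_mulVec]
  have hab : a * b = star v ⬝ᵥ (A * (M * vecMulVec v (star v) * M) * A) *ᵥ v := by
    rw [ha, hb, aux_quad]
    have : A * M * vecMulVec v (star v) * (M * A)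
        = A * (M * vecMulVec v (star v) * M) * A := by
      simp only [Matrix.mul_assoc]
    rw [this]
  have hbb : b * b = (star v ᵥ* M) ⬝ᵥ (A * (vecMulVec v (star v) * M) * A) *ᵥ v := by
    rw [hb, aux_quad]
    have : M * A * vecMulVec v (star v) * (M * A)
        = M * (A * (vecMulVec v (star v) * M) * A) := by
      simp only [Matrix.mul_assoc]
    rw [this, ← Matrix.mulVec_mulVec, dotProduct_mulVec]
  have hI : (Complex.I * (a - b))^2 = -(a*a) + 2*(a*b) - b*b := by
    rw [mul_pow, Complex.I_sq]
    ring
  rw [hsplit, hI, haa, hab, hbb]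

lemma ug_compact (N : ℕ) : CompactSpace (Matrix.unitaryGroup (Fin N) ℂ) := by
  have hsub : (Matrix.unitaryGroup (Fin N) ℂ : Set (Matrix (Fin N) (Fin N) ℂ)) ⊆
      Set.pi Set.univ fun _ : Fin N => Set.pi Set.univ fun _ : Fin N =>
        Metric.closedBall (0 : ℂ) 1 := by
    intro A hA i _ j _
    rw [Metric.mem_closedBall, dist_zero_right]
    exact entry_norm_bound_of_unitary hA i j
  have hK : IsCompact (Set.pi Set.univ fun _ : Fin N => Set.pi Set.univ fun _ : Fin N =>
      Metric.closedBall (0 : ℂ) 1) :=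
    isCompact_univ_pi fun _ => isCompact_univ_pi fun _ => isCompact_closedBall _ _
  have hclosed : IsClosed (Matrix.unitaryGroup (Fin N) ℂ : Set (Matrix (Fin N) (Fin N) ℂ)) := by
    have hset : (Matrix.unitaryGroup (Fin N) ℂ : Set (Matrix (Fin N) (Fin N) ℂ)) =
        (fun A : Matrix (Fin N) (Fin N) ℂ => (star A * A, A * star A)) ⁻¹'
          {((1 : Matrix (Fin N) (Fin N) ℂ), (1 : Matrix (Fin N) (Fin N) ℂ))} := by
      ext A
      constructor
      · intro hA
        have h := Unitary.mem_iff.mp hA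
        simp only [Set.mem_preimage, Set.mem_singleton_iff, Prod.mk.injEq]
        exact h
      · intro hA
        simp only [Set.mem_preimage, Set.mem_singleton_iff, Prod.mk.injEq] at hA
        exact Unitary.mem_iff.mpr hA
    rw [hset]
    exact isClosed_singleton.preimage
      ((continuous_id.matrix_conjTranspose.matrix_mul continuous_id).prodMk
        (continuous_id.matrix_mul continuous_id.matrix_conjTranspose))
  exact isCompact_iff_compactSpace.mp (hK.of_isClosed_subset hclosed hsub)

end Aux

/-- Assuming the second-moment Haar average formula for `UᴴAUBUᴴCU`, the variance over
Haar-random `U` of the directional derivative `i⟨0|[UᴴHU, M]|0⟩` (whose mean is zero, so the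
variance is the mean of its square) equals
`2((M²)₀₀ − (M₀₀)²)/(N²−1) · (Tr(H²) − Tr(H)²/N)`. -/
theorem haar_variance_of_directional_derivative
    (N : ℕ) (hN : 2 ≤ N)
    (μ : Measure (Matrix.unitaryGroup (Fin N) ℂ)) [IsProbabilityMeasure μ]
    (hmoment : ∀ (A B C : Matrix (Fin N) (Fin N) ℂ) (i j : Fin N),
      ∫ U : Matrix.unitaryGroup (Fin N) ℂ,
          ((U : Matrix (Fin N) (Fin N) ℂ)ᴴ * A * U * B * (U : Matrix (Fin N) (Fin N) ℂ)ᴴ * C * U)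
            i j ∂μ
        = (A.trace * C.trace / ((N : ℂ)^2 - 1)) * B i j
          + (B.trace * (A * C).trace / ((N : ℂ)^2 - 1)) * (1 : Matrix (Fin N) (Fin N) ℂ) i j
          - (A.trace * B.trace * C.trace / ((N : ℂ) * ((N : ℂ)^2 - 1)))
              * (1 : Matrix (Fin N) (Fin N) ℂ) i j
          - ((A * C).trace / ((N : ℂ) * ((N : ℂ)^2 - 1))) * B i j)
    (H M : Matrix (Fin N) (Fin N) ℂ) (hH : Hᴴ = H) (hM : Mᴴ = M)
    (v : Fin N → ℂ) (hv : star v ⬝ᵥ v = 1) :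
    ∫ U : Matrix.unitaryGroup (Fin N) ℂ,
        (Complex.I *
          (star v ⬝ᵥ
            (((U : Matrix (Fin N) (Fin N) ℂ)ᴴ * H * (U : Matrix (Fin N) (Fin N) ℂ)) * M
              - M * ((U : Matrix (Fin N) (Fin N) ℂ)ᴴ * H * (U : Matrix (Fin N) (Fin N) ℂ))) *ᵥ v))^2 ∂μ
      = 2 * ((star v ⬝ᵥ (M * M) *ᵥ v) - (star v ⬝ᵥ M *ᵥ v)^2) / ((N : ℂ)^2 - 1)
          * ((H * H).trace - H.trace^2 / (N : ℂ)) := by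
  haveI : BorelSpace (Matrix.unitaryGroup (Fin N) ℂ) := ⟨rfl⟩
  haveI := ug_compact N
  haveI : IsFiniteMeasureOnCompacts μ := ⟨fun _K _ => measure_lt_top μ _⟩
  -- basic nonvanishing facts
  have hNz : (N : ℂ) ≠ 0 := Nat.cast_ne_zero.mpr (by omega)
  have hN2 : ((N : ℂ)^2 - 1) ≠ 0 := by
    intro h
    have h1 : ((N^2 : ℕ) : ℂ) = ((1 : ℕ) : ℂ) := by push_cast; linear_combination h
    have := Nat.cast_injective h1
    nlinarith [this, hN]
  -- integrability of continuous functions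
  have hInt : ∀ f : Matrix.unitaryGroup (Fin N) ℂ → ℂ, Continuous f → Integrable f μ :=
    fun f hf => hf.integrable_of_hasCompactSupport (HasCompactSupport.of_compactSpace f)
  have hUcont : Continuous (fun U : Matrix.unitaryGroup (Fin N) ℂ =>
      (U : Matrix (Fin N) (Fin N) ℂ)) := continuous_subtype_val
  have hEcont : ∀ (B : Matrix (Fin N) (Fin N) ℂ),
      Continuous (fun U : Matrix.unitaryGroup (Fin N) ℂ =>
        ((U : Matrix (Fin N) (Fin N) ℂ)ᴴ * H * (U : Matrix (Fin N) (Fin N) ℂ) * B *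
          ((U : Matrix (Fin N) (Fin N) ℂ)ᴴ * H * (U : Matrix (Fin N) (Fin N) ℂ)))) := by
    intro B
    have h1 : Continuous (fun U : Matrix.unitaryGroup (Fin N) ℂ =>
        (U : Matrix (Fin N) (Fin N) ℂ)ᴴ * H * (U : Matrix (Fin N) (Fin N) ℂ)) :=
      (hUcont.matrix_conjTranspose.matrix_mul continuous_const).matrix_mul hUcont
    exact (h1.matrix_mul continuous_const).matrix_mul h1
  -- the key integral formula for quadratic expressions
  have key : ∀ (B : Matrix (Fin N) (Fin N) ℂ) (x y : Fin N → ℂ),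
      ∫ U : Matrix.unitaryGroup (Fin N) ℂ,
          x ⬝ᵥ ((U : Matrix (Fin N) (Fin N) ℂ)ᴴ * H * (U : Matrix (Fin N) (Fin N) ℂ) * B *
            ((U : Matrix (Fin N) (Fin N) ℂ)ᴴ * H * (U : Matrix (Fin N) (Fin N) ℂ))) *ᵥ y ∂μ
        = (H.trace * H.trace / ((N : ℂ)^2 - 1) - (H * H).trace / ((N : ℂ) * ((N : ℂ)^2 - 1)))
            * (x ⬝ᵥ B *ᵥ y)
          + (B.trace * (H * H).trace / ((N : ℂ)^2 - 1)
              - H.trace * B.trace * H.trace / ((N : ℂ) * ((N : ℂ)^2 - 1))) * (x ⬝ᵥ y) := by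
    intro B x y
    have hDent : ∀ (i j : Fin N),
        ∫ U : Matrix.unitaryGroup (Fin N) ℂ,
            ((U : Matrix (Fin N) (Fin N) ℂ)ᴴ * H * (U : Matrix (Fin N) (Fin N) ℂ) * B *
              ((U : Matrix (Fin N) (Fin N) ℂ)ᴴ * H * (U : Matrix (Fin N) (Fin N) ℂ))) i j ∂μ
          = (H.trace * H.trace / ((N : ℂ)^2 - 1)) * B i j
            + (B.trace * (H * H).trace / ((N : ℂ)^2 - 1)) * (1 : Matrix (Fin N) (Fin N) ℂ) i j
            - (H.trace * B.trace * H.trace / ((N : ℂ) * ((N : ℂ)^2 - 1)))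
                * (1 : Matrix (Fin N) (Fin N) ℂ) i j
            - ((H * H).trace / ((N : ℂ) * ((N : ℂ)^2 - 1))) * B i j := by
      intro i j
      have hassoc : ∀ U : Matrix.unitaryGroup (Fin N) ℂ,
          (U : Matrix (Fin N) (Fin N) ℂ)ᴴ * H * (U : Matrix (Fin N) (Fin N) ℂ) * B *
              ((U : Matrix (Fin N) (Fin N) ℂ)ᴴ * H * (U : Matrix (Fin N) (Fin N) ℂ))
            = (U : Matrix (Fin N) (Fin N) ℂ)ᴴ * H * U * B * (U : Matrix (Fin N) (Fin N) ℂ)ᴴ *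
                H * U := by
        intro U
        simp only [Matrix.mul_assoc]
      simp_rw [hassoc]
      exact hmoment H B H i j
    calc
      ∫ U : Matrix.unitaryGroup (Fin N) ℂ,
          x ⬝ᵥ ((U : Matrix (Fin N) (Fin N) ℂ)ᴴ * H * (U : Matrix (Fin N) (Fin N) ℂ) * B *
            ((U : Matrix (Fin N) (Fin N) ℂ)ᴴ * H * (U : Matrix (Fin N) (Fin N) ℂ))) *ᵥ y ∂μ
        = ∫ U : Matrix.unitaryGroup (Fin N) ℂ,
            ∑ p ∈ Finset.univ ×ˢ Finset.univ,
              x p.1 * ((U : Matrix (Fin N) (Fin N) ℂ)ᴴ * H * (U : Matrix (Fin N) (Fin N) ℂ) * B *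
                ((U : Matrix (Fin N) (Fin N) ℂ)ᴴ * H * (U : Matrix (Fin N) (Fin N) ℂ))) p.1 p.2
                * y p.2 ∂μ := by
          simp_rw [aux_dot_sum]
      _ = ∑ p ∈ Finset.univ ×ˢ Finset.univ,
            ∫ U : Matrix.unitaryGroup (Fin N) ℂ,
              x p.1 * ((U : Matrix (Fin N) (Fin N) ℂ)ᴴ * H * (U : Matrix (Fin N) (Fin N) ℂ) * B *
                ((U : Matrix (Fin N) (Fin N) ℂ)ᴴ * H * (U : Matrix (Fin N) (Fin N) ℂ))) p.1 p.2
                * y p.2 ∂μ := by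
          refine integral_finset_sum _ fun p _ => ?_
          exact ((hInt _ ((hEcont B).matrix_elem p.1 p.2)).const_mul _).mul_const _
      _ = ∑ p ∈ Finset.univ ×ˢ Finset.univ,
            (x p.1 * y p.2) *
              ((H.trace * H.trace / ((N : ℂ)^2 - 1)) * B p.1 p.2
                + (B.trace * (H * H).trace / ((N : ℂ)^2 - 1)) * (1 : Matrix (Fin N) (Fin N) ℂ) p.1 p.2
                - (H.trace * B.trace * H.trace / ((N : ℂ) * ((N : ℂ)^2 - 1)))
                    * (1 : Matrix (Fin N) (Fin N) ℂ) p.1 p.2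
                - ((H * H).trace / ((N : ℂ) * ((N : ℂ)^2 - 1))) * B p.1 p.2) := by
          refine Finset.sum_congr rfl fun p _ => ?_
          rw [show (fun U : Matrix.unitaryGroup (Fin N) ℂ =>
              x p.1 * ((U : Matrix (Fin N) (Fin N) ℂ)ᴴ * H * (U : Matrix (Fin N) (Fin N) ℂ) * B *
                ((U : Matrix (Fin N) (Fin N) ℂ)ᴴ * H * (U : Matrix (Fin N) (Fin N) ℂ))) p.1 p.2
                * y p.2)
            = fun U : Matrix.unitaryGroup (Fin N) ℂ =>
              (x p.1 * y p.2) * ((U : Matrix (Fin N) (Fin N) ℂ)ᴴ * H * (U : Matrix (Fin N) (Fin N) ℂ) * B *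
                ((U : Matrix (Fin N) (Fin N) ℂ)ᴴ * H * (U : Matrix (Fin N) (Fin N) ℂ))) p.1 p.2
            from funext fun U => by ring]
          rw [integral_const_mul, hDent p.1 p.2]
      _ = (H.trace * H.trace / ((N : ℂ)^2 - 1) - (H * H).trace / ((N : ℂ) * ((N : ℂ)^2 - 1)))
            * ∑ p ∈ Finset.univ ×ˢ Finset.univ, x p.1 * B p.1 p.2 * y p.2
          + (B.trace * (H * H).trace / ((N : ℂ)^2 - 1)
              - H.trace * B.trace * H.trace / ((N : ℂ) * ((N : ℂ)^2 - 1)))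
            * ∑ p ∈ Finset.univ ×ˢ Finset.univ,
                x p.1 * (1 : Matrix (Fin N) (Fin N) ℂ) p.1 p.2 * y p.2 := by
          rw [Finset.mul_sum, Finset.mul_sum, ← Finset.sum_add_distrib]
          refine Finset.sum_congr rfl fun p _ => ?_
          ring
      _ = _ := by
          rw [← aux_dot_sum x y B, ← aux_dot_sum x y 1, Matrix.one_mulVec]
  -- rewrite the integrand pointwise
  have hpt : ∀ U : Matrix.unitaryGroup (Fin N) ℂ,
      (Complex.I *
        (star v ⬝ᵥ
          (((U : Matrix (Fin N) (Fin N) ℂ)ᴴ * H * (U : Matrix (Fin N) (Fin N) ℂ)) * M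
            - M * ((U : Matrix (Fin N) (Fin N) ℂ)ᴴ * H * (U : Matrix (Fin N) (Fin N) ℂ))) *ᵥ v))^2
      = -(star v ⬝ᵥ ((U : Matrix (Fin N) (Fin N) ℂ)ᴴ * H * (U : Matrix (Fin N) (Fin N) ℂ) *
            (M * vecMulVec v (star v)) *
            ((U : Matrix (Fin N) (Fin N) ℂ)ᴴ * H * (U : Matrix (Fin N) (Fin N) ℂ))) *ᵥ (M *ᵥ v))
        + 2 * (star v ⬝ᵥ ((U : Matrix (Fin N) (Fin N) ℂ)ᴴ * H * (U : Matrix (Fin N) (Fin N) ℂ) *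
            (M * vecMulVec v (star v) * M) *
            ((U : Matrix (Fin N) (Fin N) ℂ)ᴴ * H * (U : Matrix (Fin N) (Fin N) ℂ))) *ᵥ v)
        - ((star v ᵥ* M) ⬝ᵥ ((U : Matrix (Fin N) (Fin N) ℂ)ᴴ * H * (U : Matrix (Fin N) (Fin N) ℂ) *
            (vecMulVec v (star v) * M) *
            ((U : Matrix (Fin N) (Fin N) ℂ)ᴴ * H * (U : Matrix (Fin N) (Fin N) ℂ))) *ᵥ v) :=
    fun U => aux_pointwise _ M v
  simp_rw [hpt]
  -- integrability of the three pieces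
  have hi1 : Integrable (fun U : Matrix.unitaryGroup (Fin N) ℂ =>
      star v ⬝ᵥ ((U : Matrix (Fin N) (Fin N) ℂ)ᴴ * H * (U : Matrix (Fin N) (Fin N) ℂ) *
        (M * vecMulVec v (star v)) *
        ((U : Matrix (Fin N) (Fin N) ℂ)ᴴ * H * (U : Matrix (Fin N) (Fin N) ℂ))) *ᵥ (M *ᵥ v)) μ :=
    hInt _ (continuous_const.dotProduct ((hEcont _).matrix_mulVec continuous_const))
  have hi2 : Integrable (fun U : Matrix.unitaryGroup (Fin N) ℂ =>
      star v ⬝ᵥ ((U : Matrix (Fin N) (Fin N) ℂ)ᴴ * H * (U : Matrix (Fin N) (Fin N) ℂ) *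
        (M * vecMulVec v (star v) * M) *
        ((U : Matrix (Fin N) (Fin N) ℂ)ᴴ * H * (U : Matrix (Fin N) (Fin N) ℂ))) *ᵥ v) μ :=
    hInt _ (continuous_const.dotProduct ((hEcont _).matrix_mulVec continuous_const))
  have hi3 : Integrable (fun U : Matrix.unitaryGroup (Fin N) ℂ =>
      (star v ᵥ* M) ⬝ᵥ ((U : Matrix (Fin N) (Fin N) ℂ)ᴴ * H * (U : Matrix (Fin N) (Fin N) ℂ) *
        (vecMulVec v (star v) * M) *
        ((U : Matrix (Fin N) (Fin N) ℂ)ᴴ * H * (U : Matrix (Fin N) (Fin N) ℂ))) *ᵥ v) μ :=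
    hInt _ (continuous_const.dotProduct ((hEcont _).matrix_mulVec continuous_const))
  have hin1 : Integrable (fun U : Matrix.unitaryGroup (Fin N) ℂ =>
      -(star v ⬝ᵥ ((U : Matrix (Fin N) (Fin N) ℂ)ᴴ * H * (U : Matrix (Fin N) (Fin N) ℂ) *
        (M * vecMulVec v (star v)) *
        ((U : Matrix (Fin N) (Fin N) ℂ)ᴴ * H * (U : Matrix (Fin N) (Fin N) ℂ))) *ᵥ (M *ᵥ v))) μ := by
    exact hi1.neg
  have hin2 : Integrable (fun U : Matrix.unitaryGroup (Fin N) ℂ =>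
      2 * (star v ⬝ᵥ ((U : Matrix (Fin N) (Fin N) ℂ)ᴴ * H * (U : Matrix (Fin N) (Fin N) ℂ) *
        (M * vecMulVec v (star v) * M) *
        ((U : Matrix (Fin N) (Fin N) ℂ)ᴴ * H * (U : Matrix (Fin N) (Fin N) ℂ))) *ᵥ v)) μ := by
    exact hi2.const_mul 2
  have hin12 : Integrable (fun U : Matrix.unitaryGroup (Fin N) ℂ =>
      -(star v ⬝ᵥ ((U : Matrix (Fin N) (Fin N) ℂ)ᴴ * H * (U : Matrix (Fin N) (Fin N) ℂ) *
        (M * vecMulVec v (star v)) *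
        ((U : Matrix (Fin N) (Fin N) ℂ)ᴴ * H * (U : Matrix (Fin N) (Fin N) ℂ))) *ᵥ (M *ᵥ v))
      + 2 * (star v ⬝ᵥ ((U : Matrix (Fin N) (Fin N) ℂ)ᴴ * H * (U : Matrix (Fin N) (Fin N) ℂ) *
        (M * vecMulVec v (star v) * M) *
        ((U : Matrix (Fin N) (Fin N) ℂ)ᴴ * H * (U : Matrix (Fin N) (Fin N) ℂ))) *ᵥ v)) μ := by
    exact hin1.add hin2
  rw [integral_sub hin12 hi3, integral_add hin1 hin2, integral_neg, integral_const_mul,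
    key (M * vecMulVec v (star v)) (star v) (M *ᵥ v),
    key (M * vecMulVec v (star v) * M) (star v) v,
    key (vecMulVec v (star v) * M) (star v ᵥ* M) v]
  -- evaluate the dot products and traces
  have hm1 : star v ⬝ᵥ (M *ᵥ v) = star v ⬝ᵥ M *ᵥ v := rfl
  have hd1 : star v ⬝ᵥ (M * vecMulVec v (star v)) *ᵥ (M *ᵥ v)
      = (star v ⬝ᵥ M *ᵥ v) * (star v ⬝ᵥ M *ᵥ v) := by
    rw [aux_mul_vecMulVec, aux_vecMulVec_mulVec, dotProduct_smul, smul_eq_mul]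
  have hvM : (star v ᵥ* M) ⬝ᵥ v = star v ⬝ᵥ M *ᵥ v := (dotProduct_mulVec _ _ _).symm
  have hd2 : star v ⬝ᵥ (M * vecMulVec v (star v) * M) *ᵥ v
      = (star v ⬝ᵥ M *ᵥ v) * (star v ⬝ᵥ M *ᵥ v) := by
    rw [aux_mul_vecMulVec, aux_vecMulVec_mul, aux_vecMulVec_mulVec, dotProduct_smul,
      smul_eq_mul, hvM, mul_comm]
  have hd3 : (star v ᵥ* M) ⬝ᵥ (vecMulVec v (star v) * M) *ᵥ v
      = (star v ⬝ᵥ M *ᵥ v) * (star v ⬝ᵥ M *ᵥ v) := by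
    rw [aux_vecMulVec_mul, aux_vecMulVec_mulVec, dotProduct_smul, smul_eq_mul, hvM]
  have ht1 : (M * vecMulVec v (star v)).trace = star v ⬝ᵥ M *ᵥ v := by
    rw [aux_mul_vecMulVec, aux_trace_vecMulVec]
  have ht2 : (M * vecMulVec v (star v) * M).trace = star v ⬝ᵥ (M * M) *ᵥ v := by
    rw [aux_mul_vecMulVec, aux_vecMulVec_mul, aux_trace_vecMulVec, dotProduct_mulVec,
      Matrix.vecMul_vecMul]
    exact (dotProduct_mulVec _ _ _).symm
  have ht3 : (vecMulVec v (star v) * M).trace = star v ⬝ᵥ M *ᵥ v := by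
    rw [aux_vecMulVec_mul, aux_trace_vecMulVec, hvM]
  rw [hd1, hd2, hd3, hm1, ht1, ht2, ht3, hvM, hv]
  field_simp
  ring
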